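/- arXiv:1910.06403 — 2 statements merged into one kernel-verified Lean document; each statement's English description precedes it below -/
import Mathlib

section
/- Suppose (ii) for every x ∈ X, α̂_N(x) → α(x) almost surely as N → ∞, and (iii) there exists an integrable function ℓ : ℝ^s → ℝ such that for almost every ε and all x, y ∈ X, |A(x, ε) − A(y, ε)| ≤ ℓ(ε)·dist(x, y). Then α̂_N* → α* almost surely, and dist(x̂_N, 𝒳*) → 0 almost surely. -/
/-!
The modulus `ℓ` makes every sample average `α̂_N` Lipschitz, with constant the sample mean of
the `ℓ(ε_i)`; by the strong law these constants converge almost surely, so almost surely the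
family `(α̂_N)` is equicontinuous. Pointwise convergence on a countable dense subset then
upgrades (Ascoli) to uniform convergence on the compact space `X`. Uniform convergence gives
convergence of the maxima, and near-maximizers of a continuous function on a compact space lie
close to its argmax set.
-/

open MeasureTheory ProbabilityTheory Filter Topology Set Finset

lemma LipschitzWith.of_abs_sub_le_mul {X : Type*} [PseudoMetricSpace X] {f : X → ℝ} {K : ℝ}
    (h : ∀ x y, |f x - f y| ≤ K * dist x y) : LipschitzWith K.toNNReal f :=
  LipschitzWith.of_dist_le_mul fun x y => by
    rw [Real.dist_eq]
    exact (h x y).trans (mul_le_mul_of_nonneg_right (Real.le_coe_toNNReal K) dist_nonneg)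

lemma equicontinuous_of_abs_sub_le_mul {ι X : Type*} [PseudoMetricSpace X] {F : ι → X → ℝ}
    {K : ι → ℝ} (hF : ∀ i x y, |F i x - F i y| ≤ K i * dist x y) (hK : BddAbove (range K)) :
    Equicontinuous F := by
  obtain ⟨C, hC⟩ := hK
  refine (LipschitzWith.uniformEquicontinuous F C.toNNReal fun i => ?_).equicontinuous
  exact LipschitzWith.of_abs_sub_le_mul fun x y =>
    (hF i x y).trans (mul_le_mul_of_nonneg_right (hC ⟨i, rfl⟩) dist_nonneg)

lemma abs_mean_sub_mean_le {X : Type*} [PseudoMetricSpace X] {a : ℕ → X → ℝ} {w : ℕ → ℝ}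
    (h : ∀ i x y, |a i x - a i y| ≤ w i * dist x y) (N : ℕ) (x y : X) :
    |(N : ℝ)⁻¹ * ∑ i ∈ range N, a i x - (N : ℝ)⁻¹ * ∑ i ∈ range N, a i y| ≤
      ((N : ℝ)⁻¹ * ∑ i ∈ range N, w i) * dist x y := by
  rw [← mul_sub, ← Finset.sum_sub_distrib, abs_mul, abs_inv, Nat.abs_cast, mul_assoc,
    Finset.sum_mul]
  gcongr
  exact (Finset.abs_sum_le_sum_abs _ _).trans (Finset.sum_le_sum fun i _ => h i x y)

theorem tendstoUniformly_of_tendsto_dense {ι X α : Type*} [TopologicalSpace X] [CompactSpace X]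
    [UniformSpace α] {F : ι → X → α} {f : X → α} {l : Filter ι} {D : Set X}
    (hF : Equicontinuous F) (hf : Continuous f) (hD : Dense D)
    (h : ∀ x ∈ D, Tendsto (F · x) l (𝓝 (f x))) : TendstoUniformly F f l := by
  have hpt : ∀ x, Tendsto (F · x) l (𝓝 (f x)) := fun x =>
    (hF.isClosed_setOfPred_tendsto hf).closure_subset_iff.2 h (hD.closure_eq ▸ mem_univ x)
  exact UniformFun.tendsto_iff_tendstoUniformly.1
    ((hF.tendsto_uniformFun_iff_pi l f).2 (tendsto_pi_nhds.2 hpt))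

theorem tendsto_ciSup_of_tendstoUniformly {ι X : Type*} [Nonempty X] {F : ι → X → ℝ}
    {f : X → ℝ} {l : Filter ι} (hf : BddAbove (range f)) (h : TendstoUniformly F f l) :
    Tendsto (fun n => ⨆ x, F n x) l (𝓝 (⨆ x, f x)) := by
  rw [Metric.tendsto_nhds]
  intro e he
  filter_upwards [Metric.tendstoUniformly_iff.1 h (e / 2) (half_pos he)] with n hn
  have hclose : ∀ x, |f x - F n x| < e / 2 := fun x => by simpa only [Real.dist_eq] using hn x
  have hup : ∀ x, F n x ≤ (⨆ x, f x) + e / 2 := fun x => by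
    linarith [le_ciSup hf x, (abs_lt.1 (hclose x)).1]
  have hlow : ∀ x, f x ≤ (⨆ x, F n x) + e / 2 := fun x => by
    linarith [le_ciSup ⟨_, forall_mem_range.2 hup⟩ x, (abs_lt.1 (hclose x)).2]
  rw [Real.dist_eq, abs_lt]
  constructor <;> linarith [ciSup_le hup, ciSup_le hlow]

lemma exists_pos_infDist_argmax_lt {X : Type*} [PseudoMetricSpace X] [CompactSpace X]
    {f : X → ℝ} (hf : Continuous f) {e : ℝ} (he : 0 < e) :
    ∃ δ > 0, ∀ x, (∀ y, f y ≤ f x + δ) → Metric.infDist x {x | ∀ y, f y ≤ f x} < e := by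
  set S := {x | ∀ y, f y ≤ f x}
  set K := {x | e ≤ Metric.infDist x S}
  rcases K.eq_empty_or_nonempty with hK | hK
  · exact ⟨1, one_pos, fun x _ => not_le.1 fun hx => (hK ▸ hx : x ∈ (∅ : Set X))⟩
  obtain ⟨z, hzK, hz⟩ := (isClosed_le continuous_const
    (Metric.continuous_infDist_pt S)).isCompact.exists_isMaxOn hK hf.continuousOn
  obtain ⟨m, -, hm⟩ := isCompact_univ.exists_isMaxOn ⟨z, trivial⟩ hf.continuousOn
  have hmS : m ∈ S := fun y => hm (mem_univ y)
  have hzm : f z < f m := by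
    refine lt_of_le_of_ne (hmS z) fun hzm => ?_
    have hzS : z ∈ S := fun y => hzm ▸ hmS y
    have : e ≤ Metric.infDist z S := hzK
    linarith [Metric.infDist_zero_of_mem hzS]
  refine ⟨(f m - f z) / 2, by linarith, fun x hx => not_le.1 fun hxK => ?_⟩
  linarith [isMaxOn_iff.1 hz x hxK, hx m]

theorem tendsto_infDist_argmax_of_tendstoUniformly {ι X : Type*} [PseudoMetricSpace X]
    [CompactSpace X] {F : ι → X → ℝ} {f : X → ℝ} {l : Filter ι} (hf : Continuous f)
    (h : TendstoUniformly F f l) {x : ι → X} (hx : ∀ n y, F n y ≤ F n (x n)) :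
    Tendsto (fun n => Metric.infDist (x n) {x | ∀ y, f y ≤ f x}) l (𝓝 0) := by
  rw [Metric.tendsto_nhds]
  intro e he
  obtain ⟨δ, hδ, hnear⟩ := exists_pos_infDist_argmax_lt hf he
  filter_upwards [Metric.tendstoUniformly_iff.1 h (δ / 2) (half_pos hδ)] with n hn
  rw [Real.dist_eq, sub_zero, abs_of_nonneg Metric.infDist_nonneg]
  refine hnear _ fun y => ?_
  have hy := hn y
  have hxn := hn (x n)
  rw [Real.dist_eq, abs_lt] at hy hxn
  linarith [hx n y]

section Probability

variable {Ω E : Type*} [MeasurableSpace Ω] [MeasurableSpace E] {μ : Measure Ω}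

lemma ae_forall_of_ae_map_of_identDistrib {ι : Type*} [Countable ι] {ε : ι → Ω → E} {i₀ : ι}
    (hident : ∀ i, IdentDistrib (ε i) (ε i₀) μ μ) {p : E → Prop}
    (hp : ∀ᵐ e ∂(Measure.map (ε i₀) μ), p e) : ∀ᵐ ω ∂μ, ∀ i, p (ε i ω) :=
  ae_all_iff.2 fun i => ae_of_ae_map (hident i).aemeasurable_fst ((hident i).map_eq ▸ hp)

lemma abs_integral_sub_integral_le {X : Type*} [PseudoMetricSpace X] {g : X → Ω → ℝ}
    {ℓ : Ω → ℝ} (hg : ∀ x, Integrable (g x) μ) (hℓ : Integrable ℓ μ)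
    (h : ∀ᵐ ω ∂μ, ∀ x y, |g x ω - g y ω| ≤ ℓ ω * dist x y) (x y : X) :
    |∫ ω, g x ω ∂μ - ∫ ω, g y ω ∂μ| ≤ (∫ ω, ℓ ω ∂μ) * dist x y := by
  rw [← integral_sub (hg x) (hg y), ← integral_mul_const]
  exact (abs_integral_le_integral_abs).trans
    (integral_mono_ae ((hg x).sub (hg y)).abs (hℓ.mul_const _) (h.mono fun ω hω => hω x y))

theorem ae_tendsto_mean_comp {ε : ℕ → Ω → E}
    (hindep : Pairwise fun i j => IndepFun (ε i) (ε j) μ)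
    (hident : ∀ i, IdentDistrib (ε i) (ε 0) μ μ) {g : E → ℝ}
    (hg : Integrable g (Measure.map (ε 0) μ)) :
    ∀ᵐ ω ∂μ, Tendsto (fun N : ℕ => (N : ℝ)⁻¹ * ∑ i ∈ range N, g (ε i ω)) atTop
      (𝓝 (∫ ω, g (ε 0 ω) ∂μ)) := by
  set g' := hg.1.mk g
  have hg' : Measurable g' := hg.1.stronglyMeasurable_mk.measurable
  have hint : Integrable (g' ∘ ε 0) μ :=
    (integrable_map_measure hg'.aestronglyMeasurable (hident 0).aemeasurable_fst).1
      (hg.congr hg.1.ae_eq_mk)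
  have hslln := strong_law_ae_real (fun i => g' ∘ ε i) hint
    (fun i j hij => (hindep hij).comp hg' hg') fun i => (hident i).comp hg'
  have heq : ∀ᵐ ω ∂μ, ∀ i, g (ε i ω) = g' (ε i ω) :=
    ae_forall_of_ae_map_of_identDistrib hident hg.1.ae_eq_mk
  have hlim : ∫ ω, g (ε 0 ω) ∂μ = ∫ ω, g' (ε 0 ω) ∂μ :=
    integral_congr_ae (heq.mono fun ω hω => hω 0)
  filter_upwards [hslln, heq] with ω hω hωeq
  simpa only [hωeq, hlim, inv_mul_eq_div, Function.comp_apply] using hω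

end Probability

theorem saa_convergence_general
    {X : Type*} [MetricSpace X] [CompactSpace X] [Nonempty X]
    {Ω : Type*} [MeasureSpace Ω]
    {s : ℕ} (ε : ℕ → Ω → EuclideanSpace ℝ (Fin s))
    (hindep : iIndepFun ε ℙ)
    (hident : ∀ i, IdentDistrib (ε i) (ε 0) ℙ ℙ)
    (A : X → EuclideanSpace ℝ (Fin s) → ℝ)
    (α : X → ℝ) (hα : ∀ x, Integrable (fun ω => A x (ε 0 ω)) ℙ)
    (hαdef : ∀ x, α x = ∫ ω, A x (ε 0 ω) ∂ℙ)
    (αhat : ℕ → X → Ω → ℝ)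
    (hαhat : ∀ N x ω, αhat N x ω = (N : ℝ)⁻¹ * ∑ i ∈ Finset.range N, A x (ε i ω))
    -- (ii) pointwise almost sure convergence
    (hptwise : ∀ x, ∀ᵐ ω ∂ℙ, Tendsto (fun N => αhat N x ω) atTop (𝓝 (α x)))
    -- (iii) integrable Lipschitz modulus
    (ℓ : EuclideanSpace ℝ (Fin s) → ℝ)
    (hℓint : Integrable ℓ (Measure.map (ε 0) ℙ))
    (hℓ : ∀ᵐ e ∂(Measure.map (ε 0) ℙ), ∀ x y : X, |A x e - A y e| ≤ ℓ e * dist x y)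
    -- SAA maximizers
    (xhat : ℕ → Ω → X)
    (hxhat : ∀ N ω, ∀ y : X, αhat N y ω ≤ αhat N (xhat N ω) ω) :
    (∀ᵐ ω ∂ℙ, Tendsto (fun N => ⨆ x : X, αhat N x ω) atTop (𝓝 (⨆ x : X, α x))) ∧
    (∀ᵐ ω ∂ℙ, Tendsto (fun N => Metric.infDist (xhat N ω) {x : X | ∀ y : X, α y ≤ α x})
      atTop (𝓝 0)) := by
  have hℓε := ae_forall_of_ae_map_of_identDistrib hident hℓ
  have hℓ0 : Integrable (fun ω => ℓ (ε 0 ω)) ℙ :=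
    (integrable_map_measure hℓint.1 (hident 0).aemeasurable_fst).1 hℓint
  have hαlip : ∀ x y, |α x - α y| ≤ (∫ ω, ℓ (ε 0 ω)) * dist x y := by
    simpa only [hαdef] using abs_integral_sub_integral_le hα hℓ0 (hℓε.mono fun ω hω => hω 0)
  have hαcont : Continuous α := (LipschitzWith.of_abs_sub_le_mul hαlip).continuous
  obtain ⟨D, hDcount, hDdense⟩ := TopologicalSpace.exists_countable_dense X
  have hunif : ∀ᵐ ω ∂ℙ, TendstoUniformly (fun N x => αhat N x ω) α atTop := by
    filter_upwards [(ae_ball_iff hDcount).2 fun d _ => hptwise d, hℓε,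
      ae_tendsto_mean_comp (fun i j hij => hindep.indepFun hij) hident hℓint]
      with ω hDω hlipω hmeanω
    have hαhatlip : ∀ N x y, |αhat N x ω - αhat N y ω| ≤
        ((N : ℝ)⁻¹ * ∑ i ∈ range N, ℓ (ε i ω)) * dist x y := fun N x y => by
      simpa only [hαhat] using abs_mean_sub_mean_le (fun i => hlipω i) N x y
    exact tendstoUniformly_of_tendsto_dense
      (equicontinuous_of_abs_sub_le_mul hαhatlip hmeanω.bddAbove_range) hαcont hDdense hDω
  exact ⟨hunif.mono fun ω hω =>
      tendsto_ciSup_of_tendstoUniformly (isCompact_range hαcont).bddAbove hω,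
    hunif.mono fun ω hω =>
      tendsto_infDist_argmax_of_tendstoUniformly hαcont hω (fun N => hxhat N ω)⟩

/-- **SAA convergence (Homem-de-Mello).**
Let `(X, dist)` be a compact metric space, `(Ω, 𝓕, ℙ)` a probability space, and `(ε i)` an
i.i.d. sequence of `ℝ^s`-valued random vectors. Let `A : X × ℝ^s → ℝ` be jointly measurable,
continuous in `x`, with `α x := 𝔼[A x ε]` finite. Suppose (ii) the sample averages
`α̂ N x → α x` a.s. for each `x`, and (iii) an a.e. integrable Lipschitz modulus `ℓ`. Then
the SAA optimal values converge a.s. to the true optimal value, and the distance from any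
SAA maximizer to the true argmax set tends to `0` a.s. -/
theorem saa_convergence
    {X : Type*} [MetricSpace X] [CompactSpace X] [Nonempty X]
    [MeasurableSpace X] [BorelSpace X]
    {Ω : Type*} [MeasureSpace Ω] [IsProbabilityMeasure (ℙ : Measure Ω)]
    {s : ℕ} (ε : ℕ → Ω → EuclideanSpace ℝ (Fin s))
    (hεmeas : ∀ i, Measurable (ε i))
    (hindep : iIndepFun ε ℙ)
    (hident : ∀ i, IdentDistrib (ε i) (ε 0) ℙ ℙ)
    (A : X → EuclideanSpace ℝ (Fin s) → ℝ)
    (hA : Measurable (Function.uncurry A))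
    (hAcont : ∀ e, Continuous (fun x => A x e))
    (α : X → ℝ) (hα : ∀ x, Integrable (fun ω => A x (ε 0 ω)) ℙ)
    (hαdef : ∀ x, α x = ∫ ω, A x (ε 0 ω) ∂ℙ)
    (αhat : ℕ → X → Ω → ℝ)
    (hαhat : ∀ N x ω, αhat N x ω = (N : ℝ)⁻¹ * ∑ i ∈ Finset.range N, A x (ε i ω))
    -- (ii) pointwise almost sure convergence
    (hptwise : ∀ x, ∀ᵐ ω ∂ℙ, Tendsto (fun N => αhat N x ω) atTop (𝓝 (α x)))
    -- (iii) integrable Lipschitz modulus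
    (ℓ : EuclideanSpace ℝ (Fin s) → ℝ)
    (hℓint : Integrable ℓ (Measure.map (ε 0) ℙ))
    (hℓ : ∀ᵐ e ∂(Measure.map (ε 0) ℙ), ∀ x y : X, |A x e - A y e| ≤ ℓ e * dist x y)
    -- SAA maximizers
    (xhat : ℕ → Ω → X)
    (hxhat : ∀ N ω, ∀ y : X, αhat N y ω ≤ αhat N (xhat N ω) ω) :
    (∀ᵐ ω ∂ℙ, Tendsto (fun N => ⨆ x : X, αhat N x ω) atTop (𝓝 (⨆ x : X, α x))) ∧
    (∀ᵐ ω ∂ℙ, Tendsto (fun N => Metric.infDist (xhat N ω) {x : X | ∀ y : X, α y ≤ α x})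
      atTop (𝓝 0)) :=
  saa_convergence_general ε hindep hident A α hα hαdef αhat hαhat hptwise ℓ hℓint hℓ xhat hxhat
end

section
/- Suppose, in addition to the hypotheses of the sample average approximation convergence theorem (pointwise almost sure convergence α̂_N(x) → α(x) for each x, and the Lipschitz condition |A(x, ε) − A(y, ε)| ≤ ℓ(ε)·dist(x, y) with ℓ integrable), that (i) the base samples (ε_i) are i.i.d., (ii) for every x ∈ X the moment generating function t ↦ 𝔼[exp(t·A(x, ε))] is finite in an open neighborhood of t = 0, and (iii) the moment generating function t ↦ 𝔼[exp(t·ℓ(ε))] is finite in an open neighborhood of t = 0. Then for every δ > 0 there exist K < ∞ and β > 0 such that ℙ(dist(x̂_N, 𝒳*) > δ) ≤ K·e^{−βN} for all N ≥ 1. -/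
/-!
The true objective `α` is Lipschitz with constant `L = 𝔼 ℓ(ε)`, so by compactness the points at
distance more than `δ` from its maximizers fall short of the maximum `α(x₀)` by some `η > 0`.
Put `c = η / 3` and take a finite `c / (2|L| + 1)`-net `T` of `X`. Unless `α̂_N(z) ≥ α(z) + c`
for some `z ∈ T`, or `α̂_N(x₀) ≤ α(x₀) - c`, or the sample mean of `ℓ` is at least `|L| + 1`, the
sample maximizer `x̂_N` is a `3c`-maximizer of `α` and hence lies within `δ` of the maximizers.
Each of these finitely many events is a large deviation of an i.i.d. mean, so its probability
decays exponentially by the Cramér–Chernoff bound.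
-/

open MeasureTheory ProbabilityTheory Filter Topology Real Finset

section Measure

variable {Ω : Type*} [MeasurableSpace Ω] {μ : Measure Ω}

lemma abs_integral_sub_integral_le_s1 {F G ℓ : Ω → ℝ} (hF : Integrable F μ) (hG : Integrable G μ)
    (hℓ : Integrable ℓ μ) {d : ℝ} (h : ∀ᵐ ω ∂μ, |F ω - G ω| ≤ ℓ ω * d) :
    |μ[F] - μ[G]| ≤ μ[ℓ] * d := by
  rw [← integral_sub hF hG, ← integral_mul_const]
  exact abs_integral_le_integral_abs.trans (integral_mono_ae (hF.sub hG).abs (hℓ.mul_const d) h)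

lemma measureReal_le_sum_add_add_of_ae_subset [IsFiniteMeasure μ] {ι : Type*} {T : Finset ι}
    {B : ι → Set Ω} {s t u : Set Ω} (h : ∀ᵐ ω ∂μ, ω ∈ s → ω ∈ (⋃ i ∈ T, B i) ∪ t ∪ u) :
    μ.real s ≤ ∑ i ∈ T, μ.real (B i) + μ.real t + μ.real u :=
  (ENNReal.toReal_mono (measure_ne_top _ _) (measure_mono_ae h)).trans
    ((measureReal_union_le _ _).trans (add_le_add_left ((measureReal_union_le _ _).trans
      (add_le_add_left (measureReal_biUnion_finset_le _ _) _)) _))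

lemma ae_forall_comp_of_ae_map {E : Type*} [MeasurableSpace E] {ε : ℕ → Ω → E}
    (hident : ∀ i, IdentDistrib (ε i) (ε 0) μ μ) {p : E → Prop}
    (h : ∀ᵐ e ∂(μ.map (ε 0)), p e) : ∀ᵐ ω ∂μ, ∀ i, p (ε i ω) :=
  ae_all_iff.2 fun i => ae_of_ae_map (hident i).aemeasurable_fst ((hident i).map_eq ▸ h)

end Measure

section Cramer

variable {Ω : Type*} [MeasurableSpace Ω] {μ : Measure Ω} {X : Ω → ℝ} {a : ℝ}

lemma zero_mem_interior_integrableExpSet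
    (h : ∃ δ > (0 : ℝ), ∀ t : ℝ, |t| < δ → Integrable (fun ω => exp (t * X ω)) μ) :
    0 ∈ interior (integrableExpSet X μ) := by
  obtain ⟨δ, hδ, hint⟩ := h
  refine mem_interior.2 ⟨Metric.ball 0 δ, fun t ht => hint t ?_, Metric.isOpen_ball,
    Metric.mem_ball_self hδ⟩
  simpa using ht

lemma zero_mem_interior_integrableExpSet_neg (h : 0 ∈ interior (integrableExpSet X μ)) :
    0 ∈ interior (integrableExpSet (-X) μ) := by
  have hS : Neg.neg ⁻¹' integrableExpSet X μ ∈ 𝓝 (0 : ℝ) :=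
    continuous_neg.continuousAt.preimage_mem_nhds (by simpa using mem_interior_iff_mem_nhds.1 h)
  refine mem_interior_iff_mem_nhds.2 (mem_of_superset hS fun t ht => ?_)
  simpa [integrableExpSet, neg_mul_comm] using ht

variable [IsProbabilityMeasure μ]

/-- Since `cgf X μ` vanishes at `0` with derivative `μ[X] < a` there, it lies below `t * a`
for small `t > 0`. -/
lemma exists_pos_cgf_lt_mul (h0 : 0 ∈ interior (integrableExpSet X μ)) (ha : μ[X] < a) :
    ∃ t > 0, t ∈ integrableExpSet X μ ∧ cgf X μ t < t * a := by
  have hderiv : HasDerivAt (cgf X μ) μ[X] 0 := by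
    simpa [deriv_cgf_zero h0] using (analyticAt_cgf h0).differentiableAt.hasDerivAt
  have hslope : ∀ᶠ t in 𝓝[>] 0, slope (cgf X μ) 0 t < a :=
    hderiv.hasDerivWithinAt.limsup_slope_le' (by simp) ha
  have hint : ∀ᶠ t in 𝓝[>] 0, t ∈ interior (integrableExpSet X μ) :=
    nhdsWithin_le_nhds (isOpen_interior.mem_nhds h0)
  obtain ⟨t, ht_slope, ht_int, ht_pos⟩ := (hslope.and (hint.and self_mem_nhdsWithin)).exists
  refine ⟨t, ht_pos, interior_subset ht_int, ?_⟩
  rwa [slope_def_field, cgf_zero, sub_zero, sub_zero, div_lt_iff₀ ht_pos, mul_comm] at ht_slope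

theorem exists_measureReal_sum_ge_le_exp {Y : ℕ → Ω → ℝ} (hmeas : ∀ i, Measurable (Y i))
    (hindep : iIndepFun Y μ) (hident : ∀ i, IdentDistrib (Y i) (Y 0) μ μ)
    (h0 : 0 ∈ interior (integrableExpSet (Y 0) μ)) (ha : μ[Y 0] < a) :
    ∃ β > 0, ∀ N : ℕ, μ.real {ω | N * a ≤ ∑ i ∈ range N, Y i ω} ≤ exp (-β * N) := by
  obtain ⟨t, ht, hint, hcgf⟩ := exists_pos_cgf_lt_mul h0 ha
  refine ⟨t * a - cgf (Y 0) μ t, by linarith, fun N => ?_⟩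
  have hint_i : ∀ i, Integrable (fun ω => exp (t * Y i ω)) μ := fun i =>
    ((hident i).comp (measurable_const_mul t).exp).integrable_iff.2 hint
  have hcgf_sum : cgf (∑ i ∈ range N, Y i) μ t = N * cgf (Y 0) μ t := by
    rw [hindep.cgf_sum hmeas fun i _ => hint_i i]
    simp only [cgf, mgf_congr_of_identDistrib _ _ (hident _) t, sum_const, card_range,
      nsmul_eq_mul]
  calc μ.real {ω | N * a ≤ ∑ i ∈ range N, Y i ω}
      = μ.real {ω | N * a ≤ (∑ i ∈ range N, Y i) ω} := by simp only [Finset.sum_apply]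
    _ ≤ exp (-t * (N * a) + cgf (∑ i ∈ range N, Y i) μ t) :=
      measure_ge_le_exp_cgf _ ht.le (hindep.integrable_exp_mul_sum hmeas fun i _ => hint_i i)
    _ = exp (-(t * a - cgf (Y 0) μ t) * N) := by rw [hcgf_sum]; ring_nf

end Cramer

lemma mul_exp_le_max_mul_exp {K β β' : ℝ} (hβ : β' ≤ β) (N : ℕ) :
    K * exp (-β * N) ≤ max K 0 * exp (-β' * N) := by
  gcongr
  exact le_max_left K 0

def DecaysExponentially (u : ℕ → ℝ) : Prop :=
  ∃ K : ℝ, ∃ β > (0 : ℝ), ∀ N : ℕ, 1 ≤ N → u N ≤ K * exp (-β * N)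

namespace DecaysExponentially

variable {u v : ℕ → ℝ}

lemma of_le (hv : DecaysExponentially v) (h : ∀ N : ℕ, 1 ≤ N → u N ≤ v N) :
    DecaysExponentially u := by
  obtain ⟨K, β, hβ, hvK⟩ := hv
  exact ⟨K, β, hβ, fun N hN => (h N hN).trans (hvK N hN)⟩

lemma add (hu : DecaysExponentially u) (hv : DecaysExponentially v) :
    DecaysExponentially fun N => u N + v N := by
  obtain ⟨K₁, β₁, hβ₁, hu⟩ := hu
  obtain ⟨K₂, β₂, hβ₂, hv⟩ := hv
  refine ⟨max K₁ 0 + max K₂ 0, min β₁ β₂, lt_min hβ₁ hβ₂, fun N hN => ?_⟩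
  rw [add_mul]
  exact add_le_add ((hu N hN).trans (mul_exp_le_max_mul_exp (min_le_left _ _) N))
    ((hv N hN).trans (mul_exp_le_max_mul_exp (min_le_right _ _) N))

lemma zero : DecaysExponentially fun _ => 0 :=
  ⟨0, 1, one_pos, fun N _ => by simp⟩

lemma sum {ι : Type*} (s : Finset ι) {u : ι → ℕ → ℝ} (h : ∀ i ∈ s, DecaysExponentially (u i)) :
    DecaysExponentially fun N => ∑ i ∈ s, u i N := by
  classical
  induction s using Finset.induction_on with
  | empty => simpa using zero
  | insert i s hi ih =>
    simp_rw [sum_insert hi]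
    exact (h i (mem_insert_self i s)).add (ih fun j hj => h j (mem_insert_of_mem hj))

end DecaysExponentially

section SampleMean

variable {Ω E : Type*} (ε : ℕ → Ω → E)

noncomputable def sampleMean (g : E → ℝ) (N : ℕ) (ω : Ω) : ℝ :=
  (N : ℝ)⁻¹ * ∑ i ∈ range N, g (ε i ω)

variable {ε}

lemma abs_sampleMean_sub_le {X : Type*} [PseudoMetricSpace X] {A : X → E → ℝ} {ℓ : E → ℝ}
    {ω : Ω} (h : ∀ i x y, |A x (ε i ω) - A y (ε i ω)| ≤ ℓ (ε i ω) * dist x y) (N : ℕ) (x y : X) :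
    |sampleMean ε (A x) N ω - sampleMean ε (A y) N ω| ≤ sampleMean ε ℓ N ω * dist x y := by
  simp only [sampleMean, ← mul_sub, ← sum_sub_distrib, abs_mul, abs_inv, Nat.abs_cast, mul_assoc,
    sum_mul]
  gcongr
  exact (abs_sum_le_sum_abs _ _).trans (sum_le_sum fun i _ => h i x y)

variable [MeasurableSpace Ω] [MeasurableSpace E] {μ : Measure Ω} [IsProbabilityMeasure μ]
  {g : E → ℝ} {a : ℝ}

theorem decaysExponentially_sampleMean_ge (hεmeas : ∀ i, Measurable (ε i))
    (hindep : iIndepFun ε μ) (hident : ∀ i, IdentDistrib (ε i) (ε 0) μ μ) (hg : Measurable g)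
    (h0 : 0 ∈ interior (integrableExpSet (fun ω => g (ε 0 ω)) μ))
    (ha : μ[fun ω => g (ε 0 ω)] < a) :
    DecaysExponentially fun N => μ.real {ω | a ≤ sampleMean ε g N ω} := by
  obtain ⟨β, hβ, h⟩ := exists_measureReal_sum_ge_le_exp (Y := fun i ω => g (ε i ω))
    (fun i => hg.comp (hεmeas i)) (hindep.comp _ fun _ => hg) (fun i => (hident i).comp hg) h0 ha
  refine ⟨1, β, hβ, fun N hN => ?_⟩
  have hN : (0 : ℝ) < N := by exact_mod_cast hN
  simpa only [sampleMean, le_inv_mul_iff₀ hN, one_mul] using h N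

theorem decaysExponentially_sampleMean_le (hεmeas : ∀ i, Measurable (ε i))
    (hindep : iIndepFun ε μ) (hident : ∀ i, IdentDistrib (ε i) (ε 0) μ μ) (hg : Measurable g)
    (h0 : 0 ∈ interior (integrableExpSet (fun ω => g (ε 0 ω)) μ))
    (ha : a < μ[fun ω => g (ε 0 ω)]) :
    DecaysExponentially fun N => μ.real {ω | sampleMean ε g N ω ≤ a} := by
  have := decaysExponentially_sampleMean_ge hεmeas hindep hident (g := fun e => -g e) hg.neg
    (zero_mem_interior_integrableExpSet_neg h0) (a := -a) (by simpa [integral_neg] using ha)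
  simpa only [sampleMean, Pi.neg_apply, sum_neg_distrib, mul_neg, neg_le_neg_iff] using this

end SampleMean

section Argmax

variable {X : Type*} [PseudoMetricSpace X]

lemma exists_finset_forall_dist_lt [CompactSpace X] {r : ℝ} (hr : 0 < r) :
    ∃ T : Finset X, ∀ x, ∃ z ∈ T, dist x z < r := by
  obtain ⟨t, -, ht, hcover⟩ := finite_cover_balls_of_compact (isCompact_univ (X := X)) hr
  refine ⟨ht.toFinset, fun x => ?_⟩
  obtain ⟨z, hz, hxz⟩ := Set.mem_iUnion₂.1 (hcover (Set.mem_univ x))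
  exact ⟨z, ht.mem_toFinset.2 hz, hxz⟩

lemma Continuous.exists_pos_add_le_of_lt_infDist_maximizers [CompactSpace X] [Nonempty X]
    {f : X → ℝ} (hf : Continuous f) {δ : ℝ} (hδ : 0 < δ) :
    ∃ x₀ : X, ∃ η > 0, ∀ x, δ < Metric.infDist x {x | ∀ y, f y ≤ f x} → f x + η ≤ f x₀ := by
  obtain ⟨x₀, -, hx₀⟩ := isCompact_univ.exists_isMaxOn Set.univ_nonempty hf.continuousOn
  set M := {x | ∀ y, f y ≤ f x}
  set S := {x | δ ≤ Metric.infDist x M}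
  have hS : IsCompact S :=
    (isClosed_le continuous_const (Metric.continuous_infDist_pt M)).isCompact
  rcases S.eq_empty_or_nonempty with hSe | hSne
  · exact ⟨x₀, 1, one_pos, fun x hx => absurd (hSe.subset (show x ∈ S from hx.le)) id⟩
  obtain ⟨x₁, hx₁S, hx₁⟩ := hS.exists_isMaxOn hSne hf.continuousOn
  have hx₁M : x₁ ∉ M := fun h => by
    have : δ ≤ Metric.infDist x₁ M := hx₁S
    rw [Metric.infDist_zero_of_mem h] at this
    linarith
  obtain ⟨y, hy⟩ : ∃ y, f x₁ < f y := by simpa [M] using hx₁M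
  refine ⟨x₀, f x₀ - f x₁, by linarith [show f y ≤ f x₀ from hx₀ (Set.mem_univ y)], fun x hx => ?_⟩
  linarith [show f x ≤ f x₁ from hx₁ (show x ∈ S from hx.le)]

lemma lt_add_three_mul_of_net {f g : X → ℝ} {L c : ℝ} (hL : 0 ≤ L) {T : Finset X}
    (hT : ∀ x, ∃ z ∈ T, dist x z < c / (2 * L + 1))
    (hf : ∀ x y, |f x - f y| ≤ L * dist x y) (hg : ∀ x y, |g x - g y| ≤ (L + 1) * dist x y)
    (hTg : ∀ z ∈ T, g z < f z + c) {x y : X} (hy : f y - c < g y) (hmax : g y ≤ g x) :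
    f y < f x + 3 * c := by
  obtain ⟨z, hzT, hz⟩ := hT x
  have hd : (2 * L + 1) * dist z x ≤ c := by
    rw [dist_comm]
    exact (le_div_iff₀' (by positivity)).1 hz.le
  linarith [(abs_le.1 (hf z x)).2, (abs_le.1 (hg z x)).1, hTg z hzT]

end Argmax

section SAA

variable {X Ω E : Type*} [PseudoMetricSpace X] [CompactSpace X] [Nonempty X] [MeasurableSpace Ω]
  [MeasurableSpace E] {μ : Measure Ω} [IsProbabilityMeasure μ] {ε : ℕ → Ω → E}

theorem decaysExponentially_lt_infDist_maximizers (hεmeas : ∀ i, Measurable (ε i))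
    (hindep : iIndepFun ε μ) (hident : ∀ i, IdentDistrib (ε i) (ε 0) μ μ)
    {A : X → E → ℝ} (hA : ∀ x, Measurable (A x))
    (hmgfA : ∀ x, 0 ∈ interior (integrableExpSet (fun ω => A x (ε 0 ω)) μ))
    {α : X → ℝ} (hα : ∀ x, α x = μ[fun ω => A x (ε 0 ω)])
    {ℓ : E → ℝ} (hℓ : Measurable ℓ) (hmgfℓ : 0 ∈ interior (integrableExpSet (fun ω => ℓ (ε 0 ω)) μ))
    (hLip : ∀ᵐ ω ∂μ, ∀ i x y, |A x (ε i ω) - A y (ε i ω)| ≤ ℓ (ε i ω) * dist x y)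
    {xhat : ℕ → Ω → X}
    (hxhat : ∀ N ω y, sampleMean ε (A y) N ω ≤ sampleMean ε (A (xhat N ω)) N ω)
    {δ : ℝ} (hδ : 0 < δ) :
    DecaysExponentially fun N =>
      μ.real {ω | δ < Metric.infDist (xhat N ω) {x | ∀ y, α y ≤ α x}} := by
  set L := μ[fun ω => ℓ (ε 0 ω)]
  have hint := fun x => integrable_of_mem_interior_integrableExpSet (hmgfA x)
  have hαLip : ∀ x y, |α x - α y| ≤ |L| * dist x y := fun x y => by
    rw [hα, hα]
    refine (abs_integral_sub_integral_le_s1 (d := dist x y) (hint x) (hint y)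
      (integrable_of_mem_interior_integrableExpSet hmgfℓ) ?_).trans ?_
    · filter_upwards [hLip] with ω hω using hω 0 x y
    · exact mul_le_mul_of_nonneg_right (le_abs_self L) dist_nonneg
  have hαcont : Continuous α :=
    (LipschitzWith.of_dist_le' fun x y => by simpa only [Real.dist_eq] using hαLip x y).continuous
  obtain ⟨x₀, η, hη, hgap⟩ := hαcont.exists_pos_add_le_of_lt_infDist_maximizers hδ
  set c := η / 3 with hc_def
  have hc : 0 < c := by positivity
  obtain ⟨T, hT⟩ := exists_finset_forall_dist_lt (X := X) (r := c / (2 * |L| + 1)) (by positivity)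
  have hrate := ((DecaysExponentially.sum T fun z _ =>
    decaysExponentially_sampleMean_ge hεmeas hindep hident (hA z) (hmgfA z) (a := α z + c)
      (by rw [← hα]; linarith)).add
    (decaysExponentially_sampleMean_le hεmeas hindep hident (hA x₀) (hmgfA x₀) (a := α x₀ - c)
      (by rw [← hα]; linarith))).add
    (decaysExponentially_sampleMean_ge hεmeas hindep hident hℓ hmgfℓ (a := |L| + 1)
      (by linarith [le_abs_self L]))
  refine hrate.of_le fun N _ => measureReal_le_sum_add_add_of_ae_subset ?_
  filter_upwards [hLip] with ω hω hfar
  by_contra hclose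
  simp only [Set.mem_union, Set.mem_iUnion, Set.mem_ofPred_eq, not_or, not_exists, not_le] at hclose
  obtain ⟨⟨hnet, hx₀⟩, hℓN⟩ := hclose
  have hg : ∀ x y, |sampleMean ε (A x) N ω - sampleMean ε (A y) N ω| ≤ (|L| + 1) * dist x y :=
    fun x y => (abs_sampleMean_sub_le hω N x y).trans (by gcongr)
  linarith [lt_add_three_mul_of_net (abs_nonneg L) hT hαLip hg hnet hx₀ (hxhat N ω x₀),
    hgap _ hfar]

end SAA

theorem saa_exponential_rate_general
    {X : Type*} [MetricSpace X] [CompactSpace X] [Nonempty X]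
    [MeasurableSpace X]
    {Ω : Type*} [MeasureSpace Ω] [IsProbabilityMeasure (ℙ : Measure Ω)]
    {s : ℕ} (ε : ℕ → Ω → EuclideanSpace ℝ (Fin s))
    (hεmeas : ∀ i, Measurable (ε i))
    -- (i) the base samples are i.i.d.
    (hindep : iIndepFun ε ℙ)
    (hident : ∀ i, IdentDistrib (ε i) (ε 0) ℙ ℙ)
    (A : X → EuclideanSpace ℝ (Fin s) → ℝ)
    (hA : Measurable (Function.uncurry A))
    (α : X → ℝ)
    (hαdef : ∀ x, α x = ∫ ω, A x (ε 0 ω) ∂ℙ)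
    (αhat : ℕ → X → Ω → ℝ)
    (hαhat : ∀ N x ω, αhat N x ω = (N : ℝ)⁻¹ * ∑ i ∈ Finset.range N, A x (ε i ω))
    -- integrable Lipschitz modulus
    (ℓ : EuclideanSpace ℝ (Fin s) → ℝ)
    (hℓint : Integrable ℓ (Measure.map (ε 0) ℙ))
    (hℓ : ∀ᵐ e ∂(Measure.map (ε 0) ℙ), ∀ x y : X, |A x e - A y e| ≤ ℓ e * dist x y)
    -- (ii) the mgf of `A x ε` is finite in an open neighborhood of `t = 0`
    (hmgfA : ∀ x : X, ∃ δ > (0 : ℝ), ∀ t : ℝ, |t| < δ →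
      Integrable (fun ω => Real.exp (t * A x (ε 0 ω))) ℙ)
    -- (iii) the mgf of `ℓ ε` is finite in an open neighborhood of `t = 0`
    (hmgfℓ : ∃ δ > (0 : ℝ), ∀ t : ℝ, |t| < δ →
      Integrable (fun ω => Real.exp (t * ℓ (ε 0 ω))) ℙ)
    -- SAA maximizers
    (xhat : ℕ → Ω → X)
    (hxhat : ∀ N ω, ∀ y : X, αhat N y ω ≤ αhat N (xhat N ω) ω) :
    ∀ δ > (0 : ℝ), ∃ K : ℝ, ∃ β > (0 : ℝ), ∀ N : ℕ, 1 ≤ N →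
      (ℙ {ω | Metric.infDist (xhat N ω) {x : X | ∀ y : X, α y ≤ α x} > δ}).toReal ≤
        K * Real.exp (-β * N) := by
  intro δ hδ
  -- a measurable version of `ℓ`, so that the samples `ℓ₁ (ε i)` inherit independence
  obtain ⟨ℓ₁, hℓ₁, hℓℓ₁⟩ := hℓint.aemeasurable
  have hmgfℓ₁ : 0 ∈ interior (integrableExpSet (fun ω => ℓ₁ (ε 0 ω)) ℙ) := by
    obtain ⟨t₀, ht₀, hint⟩ := hmgfℓ
    refine zero_mem_interior_integrableExpSet ⟨t₀, ht₀, fun t ht => (hint t ht).congr ?_⟩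
    filter_upwards [ae_of_ae_map (hεmeas 0).aemeasurable hℓℓ₁] with ω hω
    rw [hω]
  have hLip : ∀ᵐ ω ∂ℙ, ∀ i x y, |A x (ε i ω) - A y (ε i ω)| ≤ ℓ₁ (ε i ω) * dist x y := by
    refine ae_forall_comp_of_ae_map (p := fun e => ∀ x y : X, |A x e - A y e| ≤ ℓ₁ e * dist x y)
      hident ?_
    filter_upwards [hℓ, hℓℓ₁] with e he hee
    simpa only [hee] using he
  have hxhat' : ∀ N ω y, sampleMean ε (A y) N ω ≤ sampleMean ε (A (xhat N ω)) N ω :=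
    fun N ω y => by simpa only [hαhat, sampleMean] using hxhat N ω y
  obtain ⟨K, β, hβ, hrate⟩ := decaysExponentially_lt_infDist_maximizers hεmeas hindep hident
    (fun x => hA.comp measurable_prodMk_left)
    (fun x => zero_mem_interior_integrableExpSet (hmgfA x)) hαdef hℓ₁ hmgfℓ₁ hLip hxhat' hδ
  exact ⟨K, β, hβ, hrate⟩

/-- **Exponential convergence rate for SAA (Homem-de-Mello).**
In the SAA setting (i.i.d. base samples, pointwise a.s. convergence, integrable Lipschitz
modulus), if moreover for each `x` the moment generating function of `A x ε` is finite in a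
neighborhood of `0`, and the moment generating function of `ℓ ε` is finite in a neighborhood
of `0`, then the distance of the SAA maximizer to the true argmax set decays to zero at an
exponential rate in probability:
`∀ δ > 0, ∃ K < ∞, β > 0, ℙ(dist(x̂_N, 𝒳*) > δ) ≤ K e^{-β N}` for all `N ≥ 1`. -/
theorem saa_exponential_rate
    {X : Type*} [MetricSpace X] [CompactSpace X] [Nonempty X]
    [MeasurableSpace X] [BorelSpace X]
    {Ω : Type*} [MeasureSpace Ω] [IsProbabilityMeasure (ℙ : Measure Ω)]
    {s : ℕ} (ε : ℕ → Ω → EuclideanSpace ℝ (Fin s))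
    (hεmeas : ∀ i, Measurable (ε i))
    -- (i) the base samples are i.i.d.
    (hindep : iIndepFun ε ℙ)
    (hident : ∀ i, IdentDistrib (ε i) (ε 0) ℙ ℙ)
    (A : X → EuclideanSpace ℝ (Fin s) → ℝ)
    (hA : Measurable (Function.uncurry A))
    (hAcont : ∀ e, Continuous (fun x => A x e))
    (α : X → ℝ) (hα : ∀ x, Integrable (fun ω => A x (ε 0 ω)) ℙ)
    (hαdef : ∀ x, α x = ∫ ω, A x (ε 0 ω) ∂ℙ)
    (αhat : ℕ → X → Ω → ℝ)
    (hαhat : ∀ N x ω, αhat N x ω = (N : ℝ)⁻¹ * ∑ i ∈ Finset.range N, A x (ε i ω))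
    -- pointwise almost sure convergence
    (hptwise : ∀ x, ∀ᵐ ω ∂ℙ, Tendsto (fun N => αhat N x ω) atTop (𝓝 (α x)))
    -- integrable Lipschitz modulus
    (ℓ : EuclideanSpace ℝ (Fin s) → ℝ)
    (hℓint : Integrable ℓ (Measure.map (ε 0) ℙ))
    (hℓ : ∀ᵐ e ∂(Measure.map (ε 0) ℙ), ∀ x y : X, |A x e - A y e| ≤ ℓ e * dist x y)
    -- (ii) the mgf of `A x ε` is finite in an open neighborhood of `t = 0`
    (hmgfA : ∀ x : X, ∃ δ > (0 : ℝ), ∀ t : ℝ, |t| < δ →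
      Integrable (fun ω => Real.exp (t * A x (ε 0 ω))) ℙ)
    -- (iii) the mgf of `ℓ ε` is finite in an open neighborhood of `t = 0`
    (hmgfℓ : ∃ δ > (0 : ℝ), ∀ t : ℝ, |t| < δ →
      Integrable (fun ω => Real.exp (t * ℓ (ε 0 ω))) ℙ)
    -- SAA maximizers
    (xhat : ℕ → Ω → X)
    (hxhat : ∀ N ω, ∀ y : X, αhat N y ω ≤ αhat N (xhat N ω) ω) :
    ∀ δ > (0 : ℝ), ∃ K : ℝ, ∃ β > (0 : ℝ), ∀ N : ℕ, 1 ≤ N →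
      (ℙ {ω | Metric.infDist (xhat N ω) {x : X | ∀ y : X, α y ≤ α x} > δ}).toReal ≤
        K * Real.exp (-β * N) :=
  saa_exponential_rate_general ε hεmeas hindep hident A hA α hαdef αhat hαhat ℓ hℓint hℓ hmgfA hmgfℓ
    xhat hxhat
end
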